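/- arXiv:1711.11089 — 2 statements merged into one kernel-verified Lean document; each statement's English description precedes it below -/
import Mathlib

section
/- Invariance of the FHK Δ-integral under Δ-a.e. equality: let f, g : [a,b]_𝕋 → ℝ_F with f(x) = g(x) Δ-a.e. on [a,b]_𝕋. If f is FHK Δ-integrable on [a,b]_𝕋, then g is FHK Δ-integrable on [a,b]_𝕋 and (FHK)∫_{[a,b]_𝕋} f(x) Δx = (FHK)∫_{[a,b]_𝕋} g(x) Δx. -/
open Set Filter Topology MeasureTheory unitInterval

noncomputable section

/-- The forward jump operator `σ` of a time scale `T ⊆ ℝ`: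
`σ(x) = inf {y ∈ T : y > x}`, with the convention `σ(x) = x`
when there is no point of `T` above `x` (so `σ(sup T) = sup T`). -/
def tsSigma (T : Set ℝ) (x : ℝ) : ℝ :=
  haveI := Classical.propDecidable ({y | y ∈ T ∧ x < y}).Nonempty
  if ({y | y ∈ T ∧ x < y}).Nonempty then sInf {y | y ∈ T ∧ x < y} else x

/-- The graininess function `μ(x) = σ(x) − x`. -/
def tsGraininess (T : Set ℝ) (x : ℝ) : ℝ := tsSigma T x - x

/-- A subset `S` of the time scale `T` has Δ-measure zero: it has Lebesgue
measure zero and contains no right-scattered points. -/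
def DeltaMeasureZero (T S : Set ℝ) : Prop :=
  S ⊆ T ∧ volume S = 0 ∧ ∀ x ∈ S, tsSigma T x = x

/-- `(δL, δR)` is a Δ-gauge on `[a,b]_T`. -/
structure IsDeltaGauge (T : Set ℝ) (a b : ℝ) (δL δR : ℝ → ℝ) : Prop where
  nonneg_left : ∀ ξ ∈ T ∩ Icc a b, 0 ≤ δL ξ
  nonneg_right : ∀ ξ ∈ T ∩ Icc a b, 0 ≤ δR ξ
  pos_left : ∀ ξ ∈ T ∩ Ioc a b, 0 < δL ξ
  pos_right : ∀ ξ ∈ T ∩ Ico a b, 0 < δR ξ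
  graininess_le : ∀ ξ ∈ T ∩ Ico a b, tsGraininess T ξ ≤ δR ξ

/-- A tagged (HK) division `{([x_{i-1}, x_i]_T, ξ_i)}_{i=1}^n` of `[a,b]_T`. -/
structure TaggedDivision (T : Set ℝ) (a b : ℝ) where
  n : ℕ
  x : ℕ → ℝ
  tag : ℕ → ℝ
  x_zero : x 0 = a
  x_last : x n = b
  x_mem : ∀ i ≤ n, x i ∈ T
  x_lt : ∀ i < n, x i < x (i + 1)
  tag_mem : ∀ i < n, tag i ∈ T
  tag_left : ∀ i < n, x i ≤ tag i
  tag_right : ∀ i < n, tag i ≤ x (i + 1)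

/-- A division is `δ`-fine when `[x_{i-1},x_i]_T ⊆ [ξ_i - δL ξ_i, ξ_i + δR ξ_i]`. -/
def TaggedDivision.IsFine {T : Set ℝ} {a b : ℝ} (D : TaggedDivision T a b)
    (δL δR : ℝ → ℝ) : Prop :=
  ∀ i < D.n, D.tag i - δL (D.tag i) ≤ D.x i ∧ D.x (i + 1) ≤ D.tag i + δR (D.tag i)

/-- The Riemann sum of a real-valued function over a tagged division. -/
def realRiemannSum {T : Set ℝ} {a b : ℝ} (g : ℝ → ℝ) (D : TaggedDivision T a b) : ℝ :=
  ∑ i ∈ Finset.range D.n, g (D.tag i) * (D.x (i + 1) - D.x i)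

/-- `g` is Henstock–Kurzweil Δ-integrable on `[a,b]_T` with integral `A`. -/
def HKIntegrableTo (T : Set ℝ) (a b : ℝ) (g : ℝ → ℝ) (A : ℝ) : Prop :=
  ∀ ε > 0, ∃ δL δR : ℝ → ℝ, IsDeltaGauge T a b δL δR ∧
    ∀ D : TaggedDivision T a b, D.IsFine δL δR → |realRiemannSum g D - A| < ε

/-- A fuzzy number, represented (via the Goetschel–Voxman characterization) by the
endpoint functions `α ↦ u̲^α = lo α` and `α ↦ u̅^α = hi α` of its level sets
`[u]^α = [lo α, hi α]`, `α ∈ [0,1]`. -/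
@[ext]
structure FuzzyNumber where
  lo : unitInterval → ℝ
  hi : unitInterval → ℝ
  lo_mono : Monotone lo
  hi_anti : Antitone hi
  lo_le_hi : ∀ α, lo α ≤ hi α
  lo_leftCont : ∀ c : unitInterval, c ≠ 0 → Tendsto lo (𝓝[<] c) (𝓝 (lo c))
  hi_leftCont : ∀ c : unitInterval, c ≠ 0 → Tendsto hi (𝓝[<] c) (𝓝 (hi c))
  lo_rightCont : Tendsto lo (𝓝[>] (0 : unitInterval)) (𝓝 (lo 0))
  hi_rightCont : Tendsto hi (𝓝[>] (0 : unitInterval)) (𝓝 (hi 0))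

namespace FuzzyNumber

/-- Level-wise addition of fuzzy numbers: `[u + v]^α = [u]^α + [v]^α`. -/
instance : Add FuzzyNumber :=
  ⟨fun u v =>
    { lo := fun α => u.lo α + v.lo α
      hi := fun α => u.hi α + v.hi α
      lo_mono := fun _ _ h => add_le_add (u.lo_mono h) (v.lo_mono h)
      hi_anti := fun _ _ h => add_le_add (u.hi_anti h) (v.hi_anti h)
      lo_le_hi := fun α => add_le_add (u.lo_le_hi α) (v.lo_le_hi α)
      lo_leftCont := fun c hc => (u.lo_leftCont c hc).add (v.lo_leftCont c hc)
      hi_leftCont := fun c hc => (u.hi_leftCont c hc).add (v.hi_leftCont c hc)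
      lo_rightCont := u.lo_rightCont.add v.lo_rightCont
      hi_rightCont := u.hi_rightCont.add v.hi_rightCont }⟩

instance : Zero FuzzyNumber :=
  ⟨{ lo := fun _ => 0
     hi := fun _ => 0
     lo_mono := monotone_const
     hi_anti := antitone_const
     lo_le_hi := fun _ => le_refl 0
     lo_leftCont := fun _ _ => tendsto_const_nhds
     hi_leftCont := fun _ _ => tendsto_const_nhds
     lo_rightCont := tendsto_const_nhds
     hi_rightCont := tendsto_const_nhds }⟩

@[simp] lemma add_lo (u v : FuzzyNumber) (α : unitInterval) :
    (u + v).lo α = u.lo α + v.lo α := rfl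
@[simp] lemma add_hi (u v : FuzzyNumber) (α : unitInterval) :
    (u + v).hi α = u.hi α + v.hi α := rfl
@[simp] lemma zero_lo (α : unitInterval) : (0 : FuzzyNumber).lo α = 0 := rfl
@[simp] lemma zero_hi (α : unitInterval) : (0 : FuzzyNumber).hi α = 0 := rfl

instance : AddCommMonoid FuzzyNumber where
  add_assoc a b c := by
    refine FuzzyNumber.ext ?_ ?_ <;> funext α <;> simp [add_assoc]
  zero_add a := by
    refine FuzzyNumber.ext ?_ ?_ <;> funext α <;> simp
  add_zero a := by
    refine FuzzyNumber.ext ?_ ?_ <;> funext α <;> simp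
  add_comm a b := by
    refine FuzzyNumber.ext ?_ ?_ <;> funext α <;> simp [add_comm]
  nsmul := nsmulRec

/-- Level-wise scalar multiplication of fuzzy numbers: `[λ ⊙ u]^α = λ [u]^α`. -/
instance : SMul ℝ FuzzyNumber :=
  ⟨fun l u =>
    if hl : 0 ≤ l then
      { lo := fun α => l * u.lo α
        hi := fun α => l * u.hi α
        lo_mono := fun _ _ h => mul_le_mul_of_nonneg_left (u.lo_mono h) hl
        hi_anti := fun _ _ h => mul_le_mul_of_nonneg_left (u.hi_anti h) hl
        lo_le_hi := fun α => mul_le_mul_of_nonneg_left (u.lo_le_hi α) hl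
        lo_leftCont := fun c hc => (u.lo_leftCont c hc).const_mul l
        hi_leftCont := fun c hc => (u.hi_leftCont c hc).const_mul l
        lo_rightCont := u.lo_rightCont.const_mul l
        hi_rightCont := u.hi_rightCont.const_mul l }
    else
      { lo := fun α => l * u.hi α
        hi := fun α => l * u.lo α
        lo_mono := fun _ _ h => mul_le_mul_of_nonpos_left (u.hi_anti h) (not_le.mp hl).le
        hi_anti := fun _ _ h => mul_le_mul_of_nonpos_left (u.lo_mono h) (not_le.mp hl).le
        lo_le_hi := fun α => mul_le_mul_of_nonpos_left (u.lo_le_hi α) (not_le.mp hl).le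
        lo_leftCont := fun c hc => (u.hi_leftCont c hc).const_mul l
        hi_leftCont := fun c hc => (u.lo_leftCont c hc).const_mul l
        lo_rightCont := u.hi_rightCont.const_mul l
        hi_rightCont := u.lo_rightCont.const_mul l }⟩

/-- The partial order on fuzzy numbers: `u ≤ v` iff `u̲^α ≤ v̲^α` and
`u̅^α ≤ v̅^α` for all `α ∈ [0,1]`. -/
instance : LE FuzzyNumber :=
  ⟨fun u v => ∀ α : unitInterval, u.lo α ≤ v.lo α ∧ u.hi α ≤ v.hi α⟩

end FuzzyNumber

/-- The Hausdorff distance on fuzzy numbers: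
`D(u,v) = sup_{α ∈ [0,1]} max {|u̲^α − v̲^α|, |u̅^α − v̅^α|}`. -/
def fuzzyDist (u v : FuzzyNumber) : ℝ :=
  ⨆ α : unitInterval, max |u.lo α - v.lo α| |u.hi α - v.hi α|

/-- The Riemann sum `S(f, D, δ) = Σ f(ξ_i) ⊙ (x_i − x_{i-1})` of a fuzzy-valued
function over a tagged division. -/
def fuzzyRiemannSum {T : Set ℝ} {a b : ℝ} (f : ℝ → FuzzyNumber)
    (D : TaggedDivision T a b) : FuzzyNumber :=
  ∑ i ∈ Finset.range D.n, (D.x (i + 1) - D.x i) • f (D.tag i)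

/-- `f` is fuzzy Henstock–Kurzweil Δ-integrable on `[a,b]_T` with integral `A`. -/
def FHKIntegrableTo (T : Set ℝ) (a b : ℝ) (f : ℝ → FuzzyNumber) (A : FuzzyNumber) : Prop :=
  ∀ ε > 0, ∃ δL δR : ℝ → ℝ, IsDeltaGauge T a b δL δR ∧
    ∀ D : TaggedDivision T a b, D.IsFine δL δR → fuzzyDist (fuzzyRiemannSum f D) A < ε

/-- `f` is fuzzy Henstock–Kurzweil Δ-integrable on `[a,b]_T`. -/
def FHKIntegrable (T : Set ℝ) (a b : ℝ) (f : ℝ → FuzzyNumber) : Prop :=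
  ∃ A : FuzzyNumber, FHKIntegrableTo T a b f A

/-- The sequence `fₙ`, with FHK Δ-integrals `Aₙ`, is uniformly FHK Δ-integrable
on `[a,b]_T`: one Δ-gauge works for all `n` simultaneously. -/
def UniformlyFHKIntegrableTo (T : Set ℝ) (a b : ℝ) (f : ℕ → ℝ → FuzzyNumber)
    (A : ℕ → FuzzyNumber) : Prop :=
  (∀ n, FHKIntegrableTo T a b (f n) (A n)) ∧
  ∀ ε > 0, ∃ δL δR : ℝ → ℝ, IsDeltaGauge T a b δL δR ∧
    ∀ D : TaggedDivision T a b, D.IsFine δL δR →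
      ∀ n, fuzzyDist (fuzzyRiemannSum (f n) D) (A n) < ε

section AuxLemmas

open FuzzyNumber

lemma fuzzyDist_bddAbove (u v : FuzzyNumber) :
    BddAbove (Set.range fun α : unitInterval => max |u.lo α - v.lo α| |u.hi α - v.hi α|) := by
  refine ⟨(max |u.lo 0| |u.lo 1| + max |v.lo 0| |v.lo 1|) ⊔
      (max |u.hi 0| |u.hi 1| + max |v.hi 0| |v.hi 1|), ?_⟩
  rintro _ ⟨α, rfl⟩
  have hlo : ∀ w : FuzzyNumber, |w.lo α| ≤ max |w.lo 0| |w.lo 1| := fun w =>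
    abs_le_max_abs_abs (w.lo_mono unitInterval.nonneg') (w.lo_mono unitInterval.le_one')
  have hhi : ∀ w : FuzzyNumber, |w.hi α| ≤ max |w.hi 0| |w.hi 1| := fun w =>
    (abs_le_max_abs_abs (w.hi_anti unitInterval.le_one')
      (w.hi_anti unitInterval.nonneg')).trans (max_comm _ _).le
  refine max_le_max ?_ ?_
  · exact (abs_sub _ _).trans (add_le_add (hlo u) (hlo v))
  · exact (abs_sub _ _).trans
      (add_le_add (hhi u) (hhi v))

lemma le_fuzzyDist (u v : FuzzyNumber) (α : unitInterval) :
    max |u.lo α - v.lo α| |u.hi α - v.hi α| ≤ fuzzyDist u v :=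
  le_ciSup (fuzzyDist_bddAbove u v) α

lemma fuzzyDist_le {u v : FuzzyNumber} {c : ℝ}
    (h : ∀ α : unitInterval, max |u.lo α - v.lo α| |u.hi α - v.hi α| ≤ c) :
    fuzzyDist u v ≤ c :=
  ciSup_le h

lemma fuzzyDist_nonneg (u v : FuzzyNumber) : 0 ≤ fuzzyDist u v :=
  le_trans (le_max_left _ _ |>.trans' (abs_nonneg _)) (le_fuzzyDist u v 0)

lemma fuzzyDist_comm (u v : FuzzyNumber) : fuzzyDist u v = fuzzyDist v u := by
  unfold fuzzyDist
  congr 1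
  funext α
  rw [abs_sub_comm, abs_sub_comm (u.hi α)]

lemma fuzzyDist_self (u : FuzzyNumber) : fuzzyDist u u = 0 := by
  unfold fuzzyDist
  simp

lemma fuzzyDist_triangle (u v w : FuzzyNumber) :
    fuzzyDist u w ≤ fuzzyDist u v + fuzzyDist v w := by
  refine fuzzyDist_le fun α => max_le ?_ ?_
  · calc |u.lo α - w.lo α| ≤ |u.lo α - v.lo α| + |v.lo α - w.lo α| := abs_sub_le _ _ _
      _ ≤ fuzzyDist u v + fuzzyDist v w :=
        add_le_add ((le_max_left _ _).trans (le_fuzzyDist u v α))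
          ((le_max_left _ _).trans (le_fuzzyDist v w α))
  · calc |u.hi α - w.hi α| ≤ |u.hi α - v.hi α| + |v.hi α - w.hi α| := abs_sub_le _ _ _
      _ ≤ fuzzyDist u v + fuzzyDist v w :=
        add_le_add ((le_max_right _ _).trans (le_fuzzyDist u v α))
          ((le_max_right _ _).trans (le_fuzzyDist v w α))

lemma fuzzyDist_add_add_le (u₁ u₂ v₁ v₂ : FuzzyNumber) :
    fuzzyDist (u₁ + u₂) (v₁ + v₂) ≤ fuzzyDist u₁ v₁ + fuzzyDist u₂ v₂ := by
  refine fuzzyDist_le fun α => max_le ?_ ?_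
  · simp only [add_lo]
    calc |u₁.lo α + u₂.lo α - (v₁.lo α + v₂.lo α)|
        = |(u₁.lo α - v₁.lo α) + (u₂.lo α - v₂.lo α)| := by rw [add_sub_add_comm]
      _ ≤ |u₁.lo α - v₁.lo α| + |u₂.lo α - v₂.lo α| := abs_add_le _ _
      _ ≤ fuzzyDist u₁ v₁ + fuzzyDist u₂ v₂ :=
        add_le_add ((le_max_left _ _).trans (le_fuzzyDist _ _ α))
          ((le_max_left _ _).trans (le_fuzzyDist _ _ α))
  · simp only [add_hi]
    calc |u₁.hi α + u₂.hi α - (v₁.hi α + v₂.hi α)|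
        = |(u₁.hi α - v₁.hi α) + (u₂.hi α - v₂.hi α)| := by rw [add_sub_add_comm]
      _ ≤ |u₁.hi α - v₁.hi α| + |u₂.hi α - v₂.hi α| := abs_add_le _ _
      _ ≤ fuzzyDist u₁ v₁ + fuzzyDist u₂ v₂ :=
        add_le_add ((le_max_right _ _).trans (le_fuzzyDist _ _ α))
          ((le_max_right _ _).trans (le_fuzzyDist _ _ α))

lemma FuzzyNumber.smul_lo (c : ℝ) (u : FuzzyNumber) (α : unitInterval) :
    (c • u).lo α = if 0 ≤ c then c * u.lo α else c * u.hi α := by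
  by_cases h : 0 ≤ c <;> simp [HSMul.hSMul, SMul.smul, h]

lemma FuzzyNumber.smul_hi (c : ℝ) (u : FuzzyNumber) (α : unitInterval) :
    (c • u).hi α = if 0 ≤ c then c * u.hi α else c * u.lo α := by
  by_cases h : 0 ≤ c <;> simp [HSMul.hSMul, SMul.smul, h]

lemma fuzzyDist_smul_le (c : ℝ) (u v : FuzzyNumber) :
    fuzzyDist (c • u) (c • v) ≤ |c| * fuzzyDist u v := by
  refine fuzzyDist_le fun α => ?_
  by_cases h : 0 ≤ c
  · rw [FuzzyNumber.smul_lo, FuzzyNumber.smul_lo, FuzzyNumber.smul_hi, FuzzyNumber.smul_hi,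
      if_pos h, if_pos h, if_pos h, if_pos h, ← mul_sub, ← mul_sub, abs_mul, abs_mul]
    exact max_le
      (mul_le_mul_of_nonneg_left ((le_max_left _ _).trans (le_fuzzyDist u v α)) (abs_nonneg c))
      (mul_le_mul_of_nonneg_left ((le_max_right _ _).trans (le_fuzzyDist u v α)) (abs_nonneg c))
  · rw [FuzzyNumber.smul_lo, FuzzyNumber.smul_lo, FuzzyNumber.smul_hi, FuzzyNumber.smul_hi,
      if_neg h, if_neg h, if_neg h, if_neg h, ← mul_sub, ← mul_sub, abs_mul, abs_mul]
    exact max_le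
      (mul_le_mul_of_nonneg_left ((le_max_right _ _).trans (le_fuzzyDist u v α)) (abs_nonneg c))
      (mul_le_mul_of_nonneg_left ((le_max_left _ _).trans (le_fuzzyDist u v α)) (abs_nonneg c))

lemma fuzzyDist_sum_le {ι : Type*} (s : Finset ι) (u v : ι → FuzzyNumber) :
    fuzzyDist (∑ i ∈ s, u i) (∑ i ∈ s, v i) ≤ ∑ i ∈ s, fuzzyDist (u i) (v i) := by
  induction s using Finset.cons_induction with
  | empty => simp [fuzzyDist_self]
  | cons i s hi ih =>
      simp only [Finset.sum_cons]
      exact (fuzzyDist_add_add_le _ _ _ _).trans (add_le_add le_rfl ih)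

end AuxLemmas

/-- **Invariance of the FHK Δ-integral under Δ-a.e. equality** (Theorem 3.6):
if `f = g` Δ-a.e. on `[a,b]_T` and `f` is FHK Δ-integrable on `[a,b]_T` with
integral `A`, then so is `g`, with the same integral. -/
theorem fhk_delta_integral_congr_ae
    (T : Set ℝ) (hTne : T.Nonempty) (hTcl : IsClosed T)
    (a b : ℝ) (ha : a ∈ T) (hb : b ∈ T) (hab : a < b)
    (f g : ℝ → FuzzyNumber)
    (hae : ∃ S : Set ℝ, DeltaMeasureZero T S ∧
      ∀ x ∈ T ∩ Icc a b, x ∉ S → f x = g x)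
    (A : FuzzyNumber) (hf : FHKIntegrableTo T a b f A) :
    FHKIntegrableTo T a b g A := by
  classical
  intro ε hε
  obtain ⟨S, ⟨hST, hS0, hSrd⟩, hfg⟩ := hae
  obtain ⟨δL0, δR0, hG0, hfine0⟩ := hf (ε / 2) (by positivity)
  set εm : ℕ → ℝ := fun m => ε / (2 ^ (m + 2) * ((m : ℝ) + 1)) with hεm
  have hεmpos : ∀ m, 0 < εm m := fun m => by
    have : (0:ℝ) < (m:ℝ) + 1 := by positivity
    rw [hεm]; positivity
  -- open sets covering the classes of S
  have hO : ∀ m : ℕ, ∃ U : Set ℝ,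
      {x | x ∈ S ∧ x ∈ Icc a b ∧ ⌈fuzzyDist (f x) (g x)⌉₊ = m} ⊆ U ∧ IsOpen U ∧
      volume U < ENNReal.ofReal (εm m) := by
    intro m
    have hz : volume {x | x ∈ S ∧ x ∈ Icc a b ∧ ⌈fuzzyDist (f x) (g x)⌉₊ = m} = 0 :=
      measure_mono_null (fun x hx => hx.1) hS0
    have hlt : volume {x | x ∈ S ∧ x ∈ Icc a b ∧ ⌈fuzzyDist (f x) (g x)⌉₊ = m} <
        ENNReal.ofReal (εm m) := by
      rw [hz]; exact ENNReal.ofReal_pos.mpr (hεmpos m)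
    obtain ⟨U, h1, h2, h3⟩ :=
      Set.exists_isOpen_lt_of_lt _ _ hlt
    exact ⟨U, h1, h2, h3⟩
  choose O hOsub hOopen hOvol using hO
  -- a radius around each point of S fitting inside the corresponding open set
  have hρ' : ∀ ξ : ℝ, ∃ ρ : ℝ, 0 < ρ ∧
      (ξ ∈ S ∩ Icc a b → Icc (ξ - ρ) (ξ + ρ) ⊆ O ⌈fuzzyDist (f ξ) (g ξ)⌉₊) := by
    intro ξ
    by_cases hξ : ξ ∈ S ∩ Icc a b
    · have hmem : ξ ∈ O ⌈fuzzyDist (f ξ) (g ξ)⌉₊ := hOsub _ ⟨hξ.1, hξ.2, rfl⟩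
      obtain ⟨r, hrpos, hball⟩ := Metric.isOpen_iff.mp (hOopen _) ξ hmem
      exact ⟨r / 2, half_pos hrpos, fun _ y hy => hball (by
          rw [Real.ball_eq_Ioo]; constructor <;> linarith [hy.1, hy.2])⟩
    · exact ⟨1, one_pos, fun h => absurd h hξ⟩
  choose ρ hρpos hρsub using hρ'
  -- the refined gauge
  set δL : ℝ → ℝ := fun ξ => if ξ ∈ S ∩ Icc a b then min (δL0 ξ) (ρ ξ) else δL0 ξ with hδL
  set δR : ℝ → ℝ := fun ξ => if ξ ∈ S ∩ Icc a b then min (δR0 ξ) (ρ ξ) else δR0 ξ with hδR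
  have hδLle : ∀ ξ, δL ξ ≤ δL0 ξ := fun ξ => by
    simp only [hδL]; split_ifs; exacts [min_le_left _ _, le_rfl]
  have hδRle : ∀ ξ, δR ξ ≤ δR0 ξ := fun ξ => by
    simp only [hδR]; split_ifs; exacts [min_le_left _ _, le_rfl]
  refine ⟨δL, δR, ⟨?_, ?_, ?_, ?_, ?_⟩, ?_⟩
  · intro ξ hξ; simp only [hδL]; split_ifs with h
    · exact le_min (hG0.nonneg_left ξ hξ) (hρpos ξ).le
    · exact hG0.nonneg_left ξ hξ
  · intro ξ hξ; simp only [hδR]; split_ifs with h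
    · exact le_min (hG0.nonneg_right ξ hξ) (hρpos ξ).le
    · exact hG0.nonneg_right ξ hξ
  · intro ξ hξ; simp only [hδL]; split_ifs with h
    · exact lt_min (hG0.pos_left ξ hξ) (hρpos ξ)
    · exact hG0.pos_left ξ hξ
  · intro ξ hξ; simp only [hδR]; split_ifs with h
    · exact lt_min (hG0.pos_right ξ hξ) (hρpos ξ)
    · exact hG0.pos_right ξ hξ
  · intro ξ hξ; simp only [hδR]; split_ifs with h
    · have hgr : tsGraininess T ξ = 0 := by
        unfold tsGraininess; rw [hSrd ξ h.1]; ring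
      rw [hgr]
      exact le_min (hG0.nonneg_right ξ ⟨hξ.1, hξ.2.1, hξ.2.2.le⟩) (hρpos ξ).le
    · exact hG0.graininess_le ξ hξ
  · intro D hD
    -- D is fine for the original gauge
    have hD0 : D.IsFine δL0 δR0 := by
      intro i hi
      obtain ⟨h1, h2⟩ := hD i hi
      constructor
      · have := hδLle (D.tag i); linarith
      · have := hδRle (D.tag i); linarith
    have hfA : fuzzyDist (fuzzyRiemannSum f D) A < ε / 2 := hfine0 D hD0
    -- monotonicity of the division points
    have hxmono : ∀ j, j ≤ D.n → ∀ i, i ≤ j → D.x i ≤ D.x j := by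
      intro j
      induction j with
      | zero => intro _ i hi; rw [Nat.le_zero.mp hi]
      | succ k ih =>
          intro hk i hi
          rcases eq_or_lt_of_le hi with h | h
          · rw [h]
          · exact (ih (by omega) i (by omega)).trans (D.x_lt k (by omega)).le
    have htagIcc : ∀ i, i < D.n → D.tag i ∈ Icc a b := by
      intro i hi
      constructor
      · have h0 := (hxmono i (by omega) 0 (by omega)).trans (D.tag_left i hi)
        rwa [D.x_zero] at h0
      · have h1 := (D.tag_right i hi).trans (hxmono D.n le_rfl (i + 1) (by omega))
        rwa [D.x_last] at h1
    have hΔ : ∀ i, i < D.n → 0 ≤ D.x (i + 1) - D.x i := fun i hi => by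
      have := D.x_lt i hi; linarith
    set t : ℕ → ℝ :=
      fun i => (D.x (i + 1) - D.x i) * fuzzyDist (f (D.tag i)) (g (D.tag i)) with ht
    -- step A : distance between the two Riemann sums is bounded by ∑ t
    have hA : fuzzyDist (fuzzyRiemannSum g D) (fuzzyRiemannSum f D) ≤
        ∑ i ∈ Finset.range D.n, t i := by
      refine (fuzzyDist_sum_le _ _ _).trans (Finset.sum_le_sum fun i hi => ?_)
      have hi' := Finset.mem_range.mp hi
      calc fuzzyDist ((D.x (i + 1) - D.x i) • g (D.tag i)) ((D.x (i + 1) - D.x i) • f (D.tag i))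
          ≤ |D.x (i + 1) - D.x i| * fuzzyDist (g (D.tag i)) (f (D.tag i)) :=
            fuzzyDist_smul_le _ _ _
        _ = t i := by rw [abs_of_nonneg (hΔ i hi'), fuzzyDist_comm, ht]
    -- tags outside S contribute 0
    set s0 : Finset ℕ := (Finset.range D.n).filter (fun i => D.tag i ∈ S) with hs0
    have hsplit : ∑ i ∈ s0, t i = ∑ i ∈ Finset.range D.n, t i := by
      rw [hs0]
      refine Finset.sum_filter_of_ne fun i hi hne => ?_
      by_contra hiS
      have hi' := Finset.mem_range.mp hi
      have hfg' : f (D.tag i) = g (D.tag i) := hfg _ ⟨D.tag_mem i hi', htagIcc i hi'⟩ hiS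
      exact hne (by rw [ht]; simp [hfg', fuzzyDist_self])
    -- fiberwise decomposition by the size class of the tag
    set M : ℕ := ((Finset.range D.n).sup fun i => ⌈fuzzyDist (f (D.tag i)) (g (D.tag i))⌉₊) + 1
      with hM
    have hmaps : ∀ i ∈ s0, ⌈fuzzyDist (f (D.tag i)) (g (D.tag i))⌉₊ ∈ Finset.range M := by
      intro i hi
      have hi' : i ∈ Finset.range D.n := (Finset.mem_filter.mp hi).1
      exact Finset.mem_range.mpr (Nat.lt_succ_of_le
        (Finset.le_sup (f := fun i => ⌈fuzzyDist (f (D.tag i)) (g (D.tag i))⌉₊) hi'))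
    have hfiber : ∑ m ∈ Finset.range M,
        ∑ i ∈ s0.filter (fun i => ⌈fuzzyDist (f (D.tag i)) (g (D.tag i))⌉₊ = m), t i =
        ∑ i ∈ s0, t i :=
      Finset.sum_fiberwise_of_maps_to hmaps t
    -- per-class estimate
    have hclass : ∀ m : ℕ,
        ∑ i ∈ s0.filter (fun i => ⌈fuzzyDist (f (D.tag i)) (g (D.tag i))⌉₊ = m), t i ≤
        ε / 4 * (1 / 2) ^ m := by
      intro m
      set E : Finset ℕ := s0.filter (fun i => ⌈fuzzyDist (f (D.tag i)) (g (D.tag i))⌉₊ = m)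
        with hE
      have hEmem : ∀ i ∈ E, i < D.n ∧ D.tag i ∈ S ∩ Icc a b ∧
          ⌈fuzzyDist (f (D.tag i)) (g (D.tag i))⌉₊ = m := by
        intro i hi
        obtain ⟨hi1, hi2⟩ := Finset.mem_filter.mp hi
        obtain ⟨hi3, hi4⟩ := Finset.mem_filter.mp hi1
        have hi5 := Finset.mem_range.mp hi3
        exact ⟨hi5, ⟨hi4, htagIcc i hi5⟩, hi2⟩
      have hsub : ∀ i ∈ E, Ioc (D.x i) (D.x (i + 1)) ⊆ O m := by
        intro i hi
        obtain ⟨hin, hiS, him⟩ := hEmem i hi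
        obtain ⟨h1, h2⟩ := hD i hin
        have hδLρ : δL (D.tag i) ≤ ρ (D.tag i) := by
          simp only [hδL, if_pos hiS]; exact min_le_right _ _
        have hδRρ : δR (D.tag i) ≤ ρ (D.tag i) := by
          simp only [hδR, if_pos hiS]; exact min_le_right _ _
        intro y hy
        have hmemIoo : y ∈ Icc (D.tag i - ρ (D.tag i)) (D.tag i + ρ (D.tag i)) := by
          constructor
          · have := hy.1; linarith
          · have := hy.2; linarith
        have := hρsub (D.tag i) hiS hmemIoo
        rwa [him] at this
      have hdisj : (E : Set ℕ).Pairwise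
          (Function.onFun Disjoint fun i => Ioc (D.x i) (D.x (i + 1))) := by
        intro i hi j hj hij
        have hiE := hEmem i (by simpa using hi)
        have hjE := hEmem j (by simpa using hj)
        simp only [Function.onFun]
        rcases lt_or_gt_of_ne hij with h | h
        · have hle : D.x (i + 1) ≤ D.x j := hxmono j (by omega) (i + 1) (by omega)
          rw [Set.Ioc_disjoint_Ioc]
          exact (min_le_left _ _).trans (hle.trans (le_max_right _ _))
        · have hle : D.x (j + 1) ≤ D.x i := hxmono i (by omega) (j + 1) (by omega)
          rw [Set.Ioc_disjoint_Ioc]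
          exact (min_le_right _ _).trans (hle.trans (le_max_left _ _))
      have hsum : ∑ i ∈ E, (D.x (i + 1) - D.x i) ≤ εm m := by
        have h1 : ENNReal.ofReal (∑ i ∈ E, (D.x (i + 1) - D.x i)) =
            ∑ i ∈ E, volume (Ioc (D.x i) (D.x (i + 1))) := by
          rw [ENNReal.ofReal_sum_of_nonneg (fun i hi => hΔ i (hEmem i hi).1)]
          exact Finset.sum_congr rfl fun i hi => Real.volume_Ioc.symm
        have h2 : ∑ i ∈ E, volume (Ioc (D.x i) (D.x (i + 1))) =
            volume (⋃ i ∈ E, Ioc (D.x i) (D.x (i + 1))) :=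
          (measure_biUnion_finset hdisj fun i _ => measurableSet_Ioc).symm
        have h3 : volume (⋃ i ∈ E, Ioc (D.x i) (D.x (i + 1))) ≤ volume (O m) :=
          measure_mono (Set.iUnion₂_subset hsub)
        have h4 : ENNReal.ofReal (∑ i ∈ E, (D.x (i + 1) - D.x i)) <
            ENNReal.ofReal (εm m) := by
          rw [h1, h2]; exact h3.trans_lt (hOvol m)
        exact ((ENNReal.ofReal_lt_ofReal_iff_of_nonneg
          (Finset.sum_nonneg fun i hi => hΔ i (hEmem i hi).1)).mp h4).le
      calc ∑ i ∈ E, t i ≤ ∑ i ∈ E, (D.x (i + 1) - D.x i) * (m : ℝ) := by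
            refine Finset.sum_le_sum fun i hi => ?_
            obtain ⟨hin, _, him⟩ := hEmem i hi
            rw [ht]
            refine mul_le_mul_of_nonneg_left ?_ (hΔ i hin)
            calc fuzzyDist (f (D.tag i)) (g (D.tag i))
                ≤ (⌈fuzzyDist (f (D.tag i)) (g (D.tag i))⌉₊ : ℝ) := Nat.le_ceil _
              _ = (m : ℝ) := by rw [him]
        _ = (∑ i ∈ E, (D.x (i + 1) - D.x i)) * (m : ℝ) := by rw [Finset.sum_mul]
        _ ≤ εm m * (m : ℝ) := mul_le_mul_of_nonneg_right hsum (Nat.cast_nonneg m)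
        _ ≤ ε / 4 * (1 / 2) ^ m := by
            rw [hεm]
            have hm1 : (0:ℝ) < (m : ℝ) + 1 := by positivity
            have heq : ε / (2 ^ (m + 2) * ((m : ℝ) + 1)) * (m : ℝ) =
                ε / 4 * (1 / 2) ^ m * ((m : ℝ) / ((m : ℝ) + 1)) := by
              rw [div_mul_eq_mul_div, show ((1:ℝ)/2)^m = 1/2^m from by rw [div_pow, one_pow],
                div_mul_div_comm, div_mul_div_comm,
                div_eq_div_iff (by positivity) (by positivity)]
              ring
            rw [heq]
            have hfrac : (m : ℝ) / ((m : ℝ) + 1) ≤ 1 :=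
              (div_le_one hm1).mpr (by linarith)
            have hpos : (0:ℝ) ≤ ε / 4 * (1 / 2) ^ m := by positivity
            calc ε / 4 * (1 / 2) ^ m * ((m : ℝ) / ((m : ℝ) + 1))
                ≤ ε / 4 * (1 / 2) ^ m * 1 := mul_le_mul_of_nonneg_left hfrac hpos
              _ = ε / 4 * (1 / 2) ^ m := by ring
    have hsum2 : ∑ i ∈ Finset.range D.n, t i ≤ ε / 2 := by
      rw [← hsplit, ← hfiber]
      calc ∑ m ∈ Finset.range M,
            ∑ i ∈ s0.filter (fun i => ⌈fuzzyDist (f (D.tag i)) (g (D.tag i))⌉₊ = m), t i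
          ≤ ∑ m ∈ Finset.range M, ε / 4 * (1 / 2) ^ m :=
            Finset.sum_le_sum fun m _ => hclass m
        _ = ε / 4 * ∑ m ∈ Finset.range M, (1 / 2 : ℝ) ^ m := by rw [Finset.mul_sum]
        _ ≤ ε / 4 * 2 :=
            mul_le_mul_of_nonneg_left (sum_geometric_two_le M) (by positivity)
        _ = ε / 2 := by ring
    calc fuzzyDist (fuzzyRiemannSum g D) A
        ≤ fuzzyDist (fuzzyRiemannSum g D) (fuzzyRiemannSum f D) +
          fuzzyDist (fuzzyRiemannSum f D) A := fuzzyDist_triangle _ _ _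
      _ < ε / 2 + ε / 2 := add_lt_add_of_le_of_lt (hA.trans hsum2) hfA
      _ = ε := by ring

end
end

section
/- Level-wise characterization of FHK Δ-integrability: a function f : [a,b]_𝕋 → ℝ_F is FHK Δ-integrable on [a,b]_𝕋 if and only if, for every α ∈ [0,1], the real-valued endpoint functions x ↦ f(x)̲^α and x ↦ f(x)̅^α are HK Δ-integrable on [a,b]_𝕋 uniformly in α, i.e., for every ε > 0 there exists a single Δ-gauge δ on [a,b]_𝕋 (independent of α) such that |S(f̲^α, D, δ) − (HK)∫_{[a,b]_𝕋} f̲^α Δx| < ε and |S(f̅^α, D, δ) − (HK)∫_{[a,b]_𝕋} f̅^α Δx| < ε for every δ-fine HK division D and every α ∈ [0,1]. -/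
open Set Filter Topology MeasureTheory unitInterval

noncomputable section

section Aux

open FuzzyNumber

lemma FuzzyNumber.smul_lo_of_nonneg (c : ℝ) (hc : 0 ≤ c) (u : FuzzyNumber) (α : unitInterval) :
    (c • u).lo α = c * u.lo α := by
  show (dite (0 ≤ c) _ _ : FuzzyNumber).lo α = c * u.lo α
  rw [dif_pos hc]

lemma FuzzyNumber.smul_hi_of_nonneg (c : ℝ) (hc : 0 ≤ c) (u : FuzzyNumber) (α : unitInterval) :
    (c • u).hi α = c * u.hi α := by
  show (dite (0 ≤ c) _ _ : FuzzyNumber).hi α = c * u.hi α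
  rw [dif_pos hc]

lemma FuzzyNumber.sum_lo {ι : Type*} (s : Finset ι) (F : ι → FuzzyNumber) (α : unitInterval) :
    (∑ i ∈ s, F i).lo α = ∑ i ∈ s, (F i).lo α := by
  induction s using Finset.cons_induction with
  | empty => simp
  | cons i s hi ih => simp [Finset.sum_cons, ih]

lemma FuzzyNumber.sum_hi {ι : Type*} (s : Finset ι) (F : ι → FuzzyNumber) (α : unitInterval) :
    (∑ i ∈ s, F i).hi α = ∑ i ∈ s, (F i).hi α := by
  induction s using Finset.cons_induction with
  | empty => simp
  | cons i s hi ih => simp [Finset.sum_cons, ih]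

lemma TaggedDivision.w_nonneg {T : Set ℝ} {a b : ℝ} (D : TaggedDivision T a b)
    {i : ℕ} (hi : i < D.n) : 0 ≤ D.x (i + 1) - D.x i :=
  le_of_lt (sub_pos.2 (D.x_lt i hi))

lemma fuzzyRiemannSum_lo {T : Set ℝ} {a b : ℝ} (f : ℝ → FuzzyNumber)
    (D : TaggedDivision T a b) (α : unitInterval) :
    (fuzzyRiemannSum f D).lo α = realRiemannSum (fun x => (f x).lo α) D := by
  unfold fuzzyRiemannSum realRiemannSum
  rw [FuzzyNumber.sum_lo]
  refine Finset.sum_congr rfl fun i hi => ?_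
  rw [FuzzyNumber.smul_lo_of_nonneg _ (D.w_nonneg (Finset.mem_range.1 hi)), mul_comm]

lemma fuzzyRiemannSum_hi {T : Set ℝ} {a b : ℝ} (f : ℝ → FuzzyNumber)
    (D : TaggedDivision T a b) (α : unitInterval) :
    (fuzzyRiemannSum f D).hi α = realRiemannSum (fun x => (f x).hi α) D := by
  unfold fuzzyRiemannSum realRiemannSum
  rw [FuzzyNumber.sum_hi]
  refine Finset.sum_congr rfl fun i hi => ?_
  rw [FuzzyNumber.smul_hi_of_nonneg _ (D.w_nonneg (Finset.mem_range.1 hi)), mul_comm]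

lemma abs_lo_sub_le_fuzzyDist (u v : FuzzyNumber) (α : unitInterval) :
    |u.lo α - v.lo α| ≤ fuzzyDist u v :=
  le_trans (le_max_left _ _) (le_ciSup (fuzzyDist_bddAbove u v) α)

lemma abs_hi_sub_le_fuzzyDist (u v : FuzzyNumber) (α : unitInterval) :
    |u.hi α - v.hi α| ≤ fuzzyDist u v :=
  le_trans (le_max_right _ _) (le_ciSup (fuzzyDist_bddAbove u v) α)

lemma tendsto_of_uniform_approx {F : unitInterval → ℝ} {l : Filter unitInterval}
    {c : unitInterval}
    (h : ∀ ε > 0, ∃ g : unitInterval → ℝ, Tendsto g l (𝓝 (g c)) ∧ ∀ α, |g α - F α| < ε) :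
    Tendsto F l (𝓝 (F c)) := by
  rw [Metric.tendsto_nhds]
  intro ε hε
  obtain ⟨g, hg, happ⟩ := h (ε/3) (by positivity)
  filter_upwards [Metric.tendsto_nhds.1 hg (ε/3) (by positivity)] with α hα
  rw [Real.dist_eq] at hα ⊢
  have h1 := abs_lt.1 (happ α)
  have h2 := abs_lt.1 (happ c)
  have h3 := abs_lt.1 hα
  rw [abs_lt]
  constructor <;> linarith [h1.1, h1.2, h2.1, h2.2, h3.1, h3.2]

end Aux

/-- **Level-wise characterization of FHK Δ-integrability** (Theorem 3.8):
`f : [a,b]_T → ℝ_F` is FHK Δ-integrable on `[a,b]_T` if and only if for every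
`α ∈ [0,1]` the endpoint functions `x ↦ f(x)̲^α` and `x ↦ f(x)̅^α` are HK
Δ-integrable on `[a,b]_T`, uniformly in `α`: for every `ε > 0` there is one
Δ-gauge `δ`, independent of `α`, such that both Riemann sums are `ε`-close to the
corresponding HK Δ-integrals for every `δ`-fine division and every `α`. -/
theorem fhk_delta_integrable_iff_levelwise_uniform
    (T : Set ℝ) (hTne : T.Nonempty) (hTcl : IsClosed T)
    (a b : ℝ) (ha : a ∈ T) (hb : b ∈ T) (hab : a < b)
    (f : ℝ → FuzzyNumber) :
    FHKIntegrable T a b f ↔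
      ∃ Alo Ahi : unitInterval → ℝ,
        (∀ α : unitInterval, HKIntegrableTo T a b (fun x => (f x).lo α) (Alo α)) ∧
        (∀ α : unitInterval, HKIntegrableTo T a b (fun x => (f x).hi α) (Ahi α)) ∧
        ∀ ε > 0, ∃ δL δR : ℝ → ℝ, IsDeltaGauge T a b δL δR ∧
          ∀ D : TaggedDivision T a b, D.IsFine δL δR → ∀ α : unitInterval,
            |realRiemannSum (fun x => (f x).lo α) D - Alo α| < ε ∧
            |realRiemannSum (fun x => (f x).hi α) D - Ahi α| < ε := by
  constructor
  · rintro ⟨A, hA⟩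
    have key : ∀ ε > 0, ∃ δL δR : ℝ → ℝ, IsDeltaGauge T a b δL δR ∧
        ∀ D : TaggedDivision T a b, D.IsFine δL δR → ∀ α : unitInterval,
          |realRiemannSum (fun x => (f x).lo α) D - A.lo α| < ε ∧
          |realRiemannSum (fun x => (f x).hi α) D - A.hi α| < ε := by
      intro ε hε
      obtain ⟨δL, δR, hδ, h⟩ := hA ε hε
      refine ⟨δL, δR, hδ, fun D hD α => ?_⟩
      have hd := h D hD
      constructor
      · rw [← fuzzyRiemannSum_lo]
        exact lt_of_le_of_lt (abs_lo_sub_le_fuzzyDist _ _ α) hd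
      · rw [← fuzzyRiemannSum_hi]
        exact lt_of_le_of_lt (abs_hi_sub_le_fuzzyDist _ _ α) hd
    refine ⟨fun α => A.lo α, fun α => A.hi α, ?_, ?_, key⟩
    · intro α ε hε
      obtain ⟨δL, δR, hδ, h⟩ := key ε hε
      exact ⟨δL, δR, hδ, fun D hD => (h D hD α).1⟩
    · intro α ε hε
      obtain ⟨δL, δR, hδ, h⟩ := key ε hε
      exact ⟨δL, δR, hδ, fun D hD => (h D hD α).2⟩
  · rintro ⟨Alo, Ahi, hlo, hhi, hU⟩
    by_cases hC : ∀ δL δR : ℝ → ℝ, IsDeltaGauge T a b δL δR →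
        ∃ D : TaggedDivision T a b, D.IsFine δL δR
    · have key : ∀ ε > 0, ∃ D : TaggedDivision T a b, ∀ α : unitInterval,
          |realRiemannSum (fun x => (f x).lo α) D - Alo α| < ε ∧
          |realRiemannSum (fun x => (f x).hi α) D - Ahi α| < ε := by
        intro ε hε
        obtain ⟨δL, δR, hδ, h⟩ := hU ε hε
        obtain ⟨D, hD⟩ := hC δL δR hδ
        exact ⟨D, h D hD⟩
      have Smono : ∀ D : TaggedDivision T a b,
          Monotone fun α => realRiemannSum (fun x => (f x).lo α) D := by
        intro D α β hαβ
        refine Finset.sum_le_sum fun i hi => ?_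
        exact mul_le_mul_of_nonneg_right ((f (D.tag i)).lo_mono hαβ)
          (D.w_nonneg (Finset.mem_range.1 hi))
      have Santi : ∀ D : TaggedDivision T a b,
          Antitone fun α => realRiemannSum (fun x => (f x).hi α) D := by
        intro D α β hαβ
        refine Finset.sum_le_sum fun i hi => ?_
        exact mul_le_mul_of_nonneg_right ((f (D.tag i)).hi_anti hαβ)
          (D.w_nonneg (Finset.mem_range.1 hi))
      have Sle : ∀ (D : TaggedDivision T a b) (α : unitInterval),
          realRiemannSum (fun x => (f x).lo α) D ≤ realRiemannSum (fun x => (f x).hi α) D := by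
        intro D α
        refine Finset.sum_le_sum fun i hi => ?_
        exact mul_le_mul_of_nonneg_right ((f (D.tag i)).lo_le_hi α)
          (D.w_nonneg (Finset.mem_range.1 hi))
      set A : FuzzyNumber :=
        { lo := Alo
          hi := Ahi
          lo_mono := by
            intro α β hαβ
            refine le_of_forall_pos_le_add fun ε hε => ?_
            obtain ⟨D, hD⟩ := key (ε/2) (by positivity)
            have h1 := abs_lt.1 (hD α).1
            have h2 := abs_lt.1 (hD β).1
            have h3 := Smono D hαβ
            simp only at h3
            linarith [h1.1, h1.2, h2.1, h2.2]
          hi_anti := by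
            intro α β hαβ
            refine le_of_forall_pos_le_add fun ε hε => ?_
            obtain ⟨D, hD⟩ := key (ε/2) (by positivity)
            have h1 := abs_lt.1 (hD α).2
            have h2 := abs_lt.1 (hD β).2
            have h3 := Santi D hαβ
            simp only at h3
            linarith [h1.1, h1.2, h2.1, h2.2]
          lo_le_hi := by
            intro α
            refine le_of_forall_pos_le_add fun ε hε => ?_
            obtain ⟨D, hD⟩ := key (ε/2) (by positivity)
            have h1 := abs_lt.1 (hD α).1
            have h2 := abs_lt.1 (hD α).2
            have h3 := Sle D α
            linarith [h1.1, h1.2, h2.1, h2.2]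
          lo_leftCont := by
            intro c hc
            refine tendsto_of_uniform_approx fun ε hε => ?_
            obtain ⟨D, hD⟩ := key ε hε
            refine ⟨fun α => realRiemannSum (fun x => (f x).lo α) D, ?_,
              fun α => (hD α).1⟩
            unfold realRiemannSum
            exact tendsto_finset_sum _ fun i _ =>
              ((f (D.tag i)).lo_leftCont c hc).mul tendsto_const_nhds
          hi_leftCont := by
            intro c hc
            refine tendsto_of_uniform_approx fun ε hε => ?_
            obtain ⟨D, hD⟩ := key ε hε
            refine ⟨fun α => realRiemannSum (fun x => (f x).hi α) D, ?_,
              fun α => (hD α).2⟩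
            unfold realRiemannSum
            exact tendsto_finset_sum _ fun i _ =>
              ((f (D.tag i)).hi_leftCont c hc).mul tendsto_const_nhds
          lo_rightCont := by
            refine tendsto_of_uniform_approx fun ε hε => ?_
            obtain ⟨D, hD⟩ := key ε hε
            refine ⟨fun α => realRiemannSum (fun x => (f x).lo α) D, ?_,
              fun α => (hD α).1⟩
            unfold realRiemannSum
            exact tendsto_finset_sum _ fun i _ =>
              (f (D.tag i)).lo_rightCont.mul tendsto_const_nhds
          hi_rightCont := by
            refine tendsto_of_uniform_approx fun ε hε => ?_
            obtain ⟨D, hD⟩ := key ε hε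
            refine ⟨fun α => realRiemannSum (fun x => (f x).hi α) D, ?_,
              fun α => (hD α).2⟩
            unfold realRiemannSum
            exact tendsto_finset_sum _ fun i _ =>
              (f (D.tag i)).hi_rightCont.mul tendsto_const_nhds }
      refine ⟨A, fun ε hε => ?_⟩
      obtain ⟨δL, δR, hδ, h⟩ := hU (ε/2) (by positivity)
      refine ⟨δL, δR, hδ, fun D hD => ?_⟩
      have hd := h D hD
      have : fuzzyDist (fuzzyRiemannSum f D) A ≤ ε/2 := by
        refine ciSup_le fun α => max_le ?_ ?_
        · rw [fuzzyRiemannSum_lo]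
          exact le_of_lt (hd α).1
        · rw [fuzzyRiemannSum_hi]
          exact le_of_lt (hd α).2
      linarith
    · push_neg at hC
      obtain ⟨δL, δR, hδ, hno⟩ := hC
      exact ⟨0, fun ε hε => ⟨δL, δR, hδ, fun D hD => absurd hD (hno D)⟩⟩

end
end
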